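/- arXiv:2201.04339 — 4 statements merged into one kernel-verified Lean document; each statement's English description precedes it below -/
import Mathlib

section
/- For rotation matrices R, R* ∈ SO(3), if tr(I − R*ᵀR) < α for some α < 2, and e_R := (1/2)·vee(R*ᵀR − RᵀR*) is the attitude error vector, then ‖e_R‖² ≤ tr(I − R*ᵀR) ≤ (2/(2−α))·‖e_R‖². -/
open Matrix

def vee (A : Matrix (Fin 3) (Fin 3) ℝ) : Fin 3 → ℝ := ![A 2 1, A 0 2, A 1 0]

set_option maxHeartbeats 1000000 in
/-- For `R, R* ∈ SO(3)`, if `tr(I − R*ᵀR) < α < 2` and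
`e_R = (1/2)·vee(R*ᵀR − RᵀR*)`, then
`‖e_R‖² ≤ tr(I − R*ᵀR) ≤ (2/(2−α))·‖e_R‖²`. -/
theorem stmt1 (R Rs : Matrix (Fin 3) (Fin 3) ℝ)
    (hR : Rᵀ * R = 1) (hRdet : R.det = 1)
    (hRs : Rsᵀ * Rs = 1) (hRsdet : Rs.det = 1)
    (α : ℝ) (hα : α < 2) (htr : (1 - Rsᵀ * R).trace < α) :
    (∑ i, ((1 / 2 : ℝ) • vee (Rsᵀ * R - Rᵀ * Rs)) i ^ 2) ≤ (1 - Rsᵀ * R).trace ∧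
    (1 - Rsᵀ * R).trace ≤ (2 / (2 - α)) * ∑ i, ((1 / 2 : ℝ) • vee (Rsᵀ * R - Rᵀ * Rs)) i ^ 2 := by
  have hRs' : Rs * Rsᵀ = 1 := mul_eq_one_comm.mp hRs
  set Q := Rsᵀ * R with hQdef
  have hT : Rᵀ * Rs = Qᵀ := by
    rw [hQdef, Matrix.transpose_mul, Matrix.transpose_transpose]
  rw [hT]
  have hQ1 : Qᵀ * Q = 1 := by
    have h1 : Qᵀ * Q = Rᵀ * (Rs * Rsᵀ) * R := by
      rw [hQdef, Matrix.transpose_mul, Matrix.transpose_transpose]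
      noncomm_ring
    rw [h1, hRs', Matrix.mul_one, hR]
  have hQ2 : Q * Qᵀ = 1 := mul_eq_one_comm.mp hQ1
  have hdet : Q.det = 1 := by
    rw [hQdef, Matrix.det_mul, Matrix.det_transpose, hRsdet, hRdet, mul_one]
  have hadj : Q.adjugate = Qᵀ := by
    have h := Matrix.adjugate_mul Q
    rw [hdet, one_smul] at h
    have h2 := congrArg (· * Qᵀ) h
    simpa [Matrix.mul_assoc, hQ2] using h2
  -- entry equations from orthogonality
  have e00 := congrFun (congrFun hQ1 0) 0
  have e11 := congrFun (congrFun hQ1 1) 1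
  have e22 := congrFun (congrFun hQ1 2) 2
  simp [Matrix.mul_apply, Fin.sum_univ_three, Matrix.one_apply] at e00 e11 e22
  -- diagonal cofactor equations
  rw [Matrix.adjugate_fin_three] at hadj
  have c00 := congrFun (congrFun hadj 0) 0
  have c11 := congrFun (congrFun hadj 1) 1
  have c22 := congrFun (congrFun hadj 2) 2
  simp [Matrix.transpose_apply] at c00 c11 c22
  -- reduce goal to entries
  have htr' : (1 - Q).trace = 3 - (Q 0 0 + Q 1 1 + Q 2 2) := by
    simp [Matrix.trace, Matrix.diag, Fin.sum_univ_three, Matrix.sub_apply, Matrix.one_apply]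
    try ring
  rw [htr'] at htr ⊢
  simp only [vee, Fin.sum_univ_three, Pi.smul_apply, smul_eq_mul, Matrix.sub_apply,
    Matrix.transpose_apply, Matrix.cons_val_zero, Matrix.cons_val_one, Matrix.head_cons,
    Matrix.cons_val_two, Matrix.tail_cons]
  set a := Q 0 0; set b := Q 0 1; set c := Q 0 2
  set d := Q 1 0; set e := Q 1 1; set f := Q 1 2
  set g := Q 2 0; set h := Q 2 1; set i := Q 2 2
  have hkey : (1/2 * (h - f))^2 + (1/2 * (c - g))^2 + (1/2 * (d - b))^2
      = 1 - ((a + e + i - 1)/2)^2 := by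
    linear_combination (1/4:ℝ) * e00 + (1/4:ℝ) * e11 + (1/4:ℝ) * e22
      + (1/2:ℝ) * c00 + (1/2:ℝ) * c11 + (1/2:ℝ) * c22
  have hS0 : (0:ℝ) ≤ 1 - ((a + e + i - 1)/2)^2 := by nlinarith [sq_nonneg (1/2*(h-f)), sq_nonneg (1/2*(c-g)), sq_nonneg (1/2*(d-b)), hkey]
  have ht3 : a + e + i ≤ 3 := by nlinarith [hS0]
  clear hadj hQ1 hQ2 hT hdet htr' hRs' hR hRs hRdet hRsdet e00 e11 e22 c00 c11 c22
  have hα0 : (0:ℝ) < 2 - α := by linarith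
  constructor
  · nlinarith [hkey, sq_nonneg (a + e + i - 3)]
  · rw [div_mul_eq_mul_div, le_div_iff₀ hα0]
    have h1 : 3 - (a + e + i) < α := htr
    nlinarith [hkey, mul_nonneg (by linarith : (0:ℝ) ≤ 3 - (a + e + i)) (by linarith : (0:ℝ) ≤ a + e + i - 3 + 2*α)]
end

section
/- Let Q₃ = [[q₁, q₂],[q₂, q₃]] where q₁ = (c₁/c₂)·λ_m, q₂ = −(c₁/c₂)·(κ + β + γ·λ_M), q₃ = κ_min − (c₁/c₂)·k·λ_M², with λ_m, λ_M, β, γ, k, c₂ > 0 fixed and κ, κ_min determined by a gain matrix that can be scaled: κ_min → ∞ while κ²/κ_min stays bounded when gains grow linearly. Then there exists c₁ > 0 and a choice of gains making Q₃ positive definite. -/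
/-!
A symmetric 2×2 matrix is positive definite once its top-left entry and its determinant are
positive. With `a = c₁/c₂` the determinant of `Q₃` is
`a (λ_m κ_min − a ((κ + β + γλ_M)² + λ_m k λ_M²))`, and `κ² ≤ C κ_min` bounds the inner bracket
by `C' κ_min` for large gains, so `a = λ_m / (2C')` and large enough gains make it positive.
-/

open Matrix Filter

theorem Matrix.posDef_of_fin_two {p q r : ℝ} (hp : 0 < p) (hdet : 0 < p * r - q ^ 2) :
    (!![p, q; q, r] : Matrix (Fin 2) (Fin 2) ℝ).PosDef := by
  refine Matrix.posDef_iff_dotProduct_mulVec.mpr ⟨?_, fun x hx => ?_⟩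
  · ext i j
    fin_cases i <;> fin_cases j <;> rfl
  · simp only [dotProduct, mulVec, Fin.sum_univ_two, of_apply, cons_val', cons_val_zero,
      cons_val_one, empty_val', cons_val_fin_one, star_trivial, Pi.star_apply]
    -- `p · xᵀ M x = (p x₀ + q x₁)² + (p r - q²) x₁²`
    by_cases h1 : x 1 = 0
    · have h0 : x 0 ≠ 0 := fun h0 => hx (by ext i; fin_cases i <;> simp [h0, h1])
      simp only [h1]
      nlinarith [sq_pos_of_ne_zero h0]
    · nlinarith [sq_nonneg (p * x 0 + q * x 1), mul_pos hdet (sq_pos_of_ne_zero h1)]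

section GainTuning

variable {α : Type*} {l : Filter α} {f g : α → ℝ} {C : ℝ}

theorem Filter.Tendsto.exists_pos_eventually_sq_add_le_mul (hf : Tendsto f l atTop)
    (hg : ∀ s, g s ^ 2 ≤ C * f s) (b d : ℝ) :
    ∃ C' > 0, ∀ᶠ s in l, (g s + b) ^ 2 + d ≤ C' * f s := by
  refine ⟨2 * max C 0 + 1, by positivity, ?_⟩
  filter_upwards [hf.eventually_ge_atTop (max (2 * b ^ 2 + d) 0)] with s hs
  have hf0 : 0 ≤ f s := (le_max_right _ _).trans hs
  calc (g s + b) ^ 2 + d ≤ 2 * g s ^ 2 + (2 * b ^ 2 + d) := by nlinarith [sq_nonneg (g s - b)]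
    _ ≤ 2 * (max C 0 * f s) + f s := by
        gcongr
        · exact (hg s).trans (mul_le_mul_of_nonneg_right (le_max_left _ _) hf0)
        · exact (le_max_left _ _).trans hs
    _ = (2 * max C 0 + 1) * f s := by ring

theorem Filter.Tendsto.exists_pos_eventually_mul_sq_add_lt_mul {m : ℝ} (hm : 0 < m)
    (hf : Tendsto f l atTop) (hg : ∀ s, g s ^ 2 ≤ C * f s) (b d : ℝ) :
    ∃ a > 0, ∀ᶠ s in l, a * ((g s + b) ^ 2 + d) < m * f s := by
  obtain ⟨C', hC', hle⟩ := hf.exists_pos_eventually_sq_add_le_mul hg b d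
  refine ⟨m / (2 * C'), by positivity, ?_⟩
  filter_upwards [hle, hf.eventually_gt_atTop 0] with s hs hpos
  calc m / (2 * C') * ((g s + b) ^ 2 + d) ≤ m / (2 * C') * (C' * f s) := by gcongr
    _ = m * f s / 2 := by field_simp
    _ < m * f s := by linarith [mul_pos hm hpos]

end GainTuning

theorem stmt14_general (lm lM β γ k c₂ : ℝ)
    (hlm : 0 < lm)
    (hc₂ : 0 < c₂)
    (κ κmin : ℝ → ℝ)
    (htend : Tendsto κmin atTop atTop)
    (hbdd : ∃ Cb : ℝ, ∀ s, (κ s) ^ 2 ≤ Cb * κmin s) :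
    ∃ c₁ : ℝ, 0 < c₁ ∧ ∃ s : ℝ,
      (!![(c₁ / c₂) * lm, -((c₁ / c₂) * (κ s + β + γ * lM));
          -((c₁ / c₂) * (κ s + β + γ * lM)), κmin s - (c₁ / c₂) * k * lM ^ 2] :
        Matrix (Fin 2) (Fin 2) ℝ).PosDef := by
  obtain ⟨Cb, hCb⟩ := hbdd
  obtain ⟨a, ha, hev⟩ :=
    htend.exists_pos_eventually_mul_sq_add_lt_mul hlm hCb (β + γ * lM) (lm * k * lM ^ 2)
  obtain ⟨s, hs⟩ := hev.exists
  refine ⟨c₂ * a, mul_pos hc₂ ha, s, ?_⟩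
  rw [mul_div_cancel_left₀ a hc₂.ne']
  refine Matrix.posDef_of_fin_two (mul_pos ha hlm) ?_
  have hdet : a * lm * (κmin s - a * k * lM ^ 2) - (-(a * (κ s + β + γ * lM))) ^ 2
      = a * (lm * κmin s - a * ((κ s + (β + γ * lM)) ^ 2 + lm * k * lM ^ 2)) := by ring
  rw [hdet]
  exact mul_pos ha (sub_pos.mpr hs)

/-- Gain-tuning step: with `q₁ = (c₁/c₂)λ_m`, `q₂ = −(c₁/c₂)(κ + β + γλ_M)`,
`q₃ = κ_min − (c₁/c₂)k·λ_M²`, where `κ, κ_min` come from a scalable gain matrix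
(`κ_min → ∞` with `κ²/κ_min` bounded), there exist `c₁ > 0` and a choice of
gains making `Q₃` positive definite. -/
theorem stmt14 (lm lM β γ k c₂ : ℝ)
    (hlm : 0 < lm) (hlM : 0 < lM) (hβ : 0 < β) (hγ : 0 < γ) (hk : 0 < k)
    (hc₂ : 0 < c₂)
    (κ κmin : ℝ → ℝ) (hκminpos : ∀ s, 0 < κmin s)
    (htend : Tendsto κmin atTop atTop)
    (hbdd : ∃ Cb : ℝ, ∀ s, (κ s) ^ 2 ≤ Cb * κmin s) :
    ∃ c₁ : ℝ, 0 < c₁ ∧ ∃ s : ℝ,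
      (!![(c₁ / c₂) * lm, -((c₁ / c₂) * (κ s + β + γ * lM));
          -((c₁ / c₂) * (κ s + β + γ * lM)), κmin s - (c₁ / c₂) * k * lM ^ 2] :
        Matrix (Fin 2) (Fin 2) ℝ).PosDef :=
  stmt14_general lm lM β γ k c₂ hlm hc₂ κ κmin htend hbdd
end

section
/- If f : [0, ∞) → ℝⁿ is uniformly continuous and ∫₀^∞ ‖f(t)‖² dt < ∞, then f(t) → 0 as t → ∞. -/
open MeasureTheory Filter Set Topology

/-! If `‖f‖` stayed `≥ ε` at arbitrarily late times, uniform continuity would keep it `≥ ε / 2`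
on a window of fixed length `δ` after each such time, so every tail `∫_{[t, ∞)} ‖f‖ ^ p` would
be at least `(ε / 2) ^ p * δ`. But the tails of an integrable function tend to `0`. -/

section Barbalat

variable {E : Type*} [SeminormedAddCommGroup E]

theorem UniformContinuousOn.exists_half_le_norm_on_Icc {f : ℝ → E} {a ε : ℝ}
    (hf : UniformContinuousOn f (Ici a)) (hε : 0 < ε) :
    ∃ δ > 0, ∀ t ≥ a, ε ≤ ‖f t‖ → ∀ s ∈ Icc t (t + δ), ε / 2 ≤ ‖f s‖ := by
  obtain ⟨δ, hδ, hfδ⟩ := Metric.uniformContinuousOn_iff.1 hf (ε / 2) (half_pos hε)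
  refine ⟨δ / 2, half_pos hδ, fun t ht hft s ⟨hts, hst⟩ => ?_⟩
  have hdist : dist s t < δ := by
    rw [Real.dist_eq, abs_of_nonneg (sub_nonneg.2 hts)]
    linarith
  have hclose : dist (f s) (f t) < ε / 2 := hfδ s (ht.trans hts) t ht hdist
  have hnorm : ‖f t‖ - ‖f s‖ ≤ dist (f s) (f t) := by
    rw [dist_comm, dist_eq_norm]
    exact norm_sub_norm_le (f t) (f s)
  linarith

theorem mul_le_setIntegral_Ici_of_le_on_Icc {g : ℝ → ℝ} {t δ c : ℝ} (hδ : 0 ≤ δ)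
    (hg : IntegrableOn g (Ici t)) (hg_nonneg : ∀ s ≥ t, 0 ≤ g s)
    (hc : ∀ s ∈ Icc t (t + δ), c ≤ g s) :
    c * δ ≤ ∫ s in Ici t, g s := by
  have hsub : Icc t (t + δ) ⊆ Ici t := Icc_subset_Ici_self
  calc c * δ = volume.real (Icc t (t + δ)) • c := by
        rw [Real.volume_real_Icc_of_le (by linarith), smul_eq_mul, add_sub_cancel_left, mul_comm]
    _ ≤ ∫ s in Icc t (t + δ), g s :=
        setIntegral_ge_of_const_le measurableSet_Icc (by simp [Real.volume_Icc]) hc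
          (hg.mono_set hsub)
    _ ≤ ∫ s in Ici t, g s :=
        setIntegral_mono_set hg ((ae_restrict_iff' measurableSet_Ici).2 (.of_forall hg_nonneg))
          (.of_forall hsub)

theorem tendsto_zero_of_uniformContinuousOn_of_integrableOn_norm_pow {f : ℝ → E} {a : ℝ}
    {p : ℕ} (hf : UniformContinuousOn f (Ici a))
    (hint : IntegrableOn (fun t => ‖f t‖ ^ p) (Ici a)) :
    Tendsto f atTop (𝓝 0) := by
  rw [tendsto_zero_iff_norm_tendsto_zero]
  refine tendsto_order.2 ⟨fun ε hε => .of_forall fun t => hε.trans_le (norm_nonneg _),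
    fun ε hε => ?_⟩
  obtain ⟨δ, hδ, hwindow⟩ := hf.exists_half_le_norm_on_Icc hε
  have htail : ∀ᶠ t in atTop, ∫ s in Ici t, ‖f s‖ ^ p < (ε / 2) ^ p * δ :=
    (tendsto_order.1 (tendsto_integral_Ici_zero tendsto_id)).2 _ (by positivity)
  filter_upwards [htail, eventually_ge_atTop a] with t hsmall hta
  by_contra! hft
  have hlarge : (ε / 2) ^ p * δ ≤ ∫ s in Ici t, ‖f s‖ ^ p :=
    mul_le_setIntegral_Ici_of_le_on_Icc hδ.le (hint.mono_set (Ici_subset_Ici.2 hta))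
      (fun s _ => by positivity)
      (fun s hs => pow_le_pow_left₀ (by positivity) (hwindow t hta hft s hs) p)
  exact hlarge.not_gt hsmall

end Barbalat

/-- Barbalat's lemma (integral form): if `f : [0,∞) → ℝⁿ` is uniformly continuous
and `∫₀^∞ ‖f(t)‖² dt < ∞`, then `f(t) → 0` as `t → ∞`. -/
theorem stmt16 (n : ℕ) (f : ℝ → EuclideanSpace ℝ (Fin n))
    (hf : UniformContinuousOn f (Set.Ici 0))
    (hint : IntegrableOn (fun t => ‖f t‖ ^ 2) (Set.Ici 0)) :
    Tendsto f atTop (nhds 0) :=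
  tendsto_zero_of_uniformContinuousOn_of_integrableOn_norm_pow hf hint
end

section
/- For rotation matrices R, R* ∈ SO(3), if tr(I − R*ᵀR) < 2 then the rotation R*ᵀR has angle θ with cos θ > 0, i.e., θ ∈ (−π/2, π/2), and consequently the attitude error vector e_R = (1/2)vee(R*ᵀR − RᵀR*) vanishes if and only if R = R*. -/
open Matrix Real

set_option maxHeartbeats 1000000

/-- For `R, R* ∈ SO(3)`, if `tr(I − R*ᵀR) < 2` then the rotation `R*ᵀR` has angle
`θ ∈ (−π/2, π/2)` (i.e. `cos θ > 0`, with `tr(R*ᵀR) = 1 + 2cos θ`), and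
consequently `e_R = (1/2)vee(R*ᵀR − RᵀR*) = 0` iff `R = R*`. -/
theorem stmt18 (R Rs : Matrix (Fin 3) (Fin 3) ℝ)
    (hR : Rᵀ * R = 1) (hRdet : R.det = 1)
    (hRs : Rsᵀ * Rs = 1) (hRsdet : Rs.det = 1)
    (htr : (1 - Rsᵀ * R).trace < 2) :
    (∃ θ ∈ Set.Ioo (-(π / 2)) (π / 2),
      (Rsᵀ * R).trace = 1 + 2 * Real.cos θ) ∧
    ((1 / 2 : ℝ) • vee (Rsᵀ * R - Rᵀ * Rs) = 0 ↔ R = Rs) := by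
  obtain ⟨Q, hQdef⟩ : ∃ Q : Matrix (Fin 3) (Fin 3) ℝ, Rsᵀ * R = Q := ⟨_, rfl⟩
  rw [hQdef] at htr ⊢
  have hRsRsT : Rs * Rsᵀ = 1 := mul_eq_one_comm.mp hRs
  have hQorth : Qᵀ * Q = 1 := by
    rw [← hQdef, transpose_mul, transpose_transpose, Matrix.mul_assoc,
      ← Matrix.mul_assoc Rs, hRsRsT, Matrix.one_mul, hR]
  have hQT : Rᵀ * Rs = Qᵀ := by
    rw [← hQdef, transpose_mul, transpose_transpose]
  have hQdet : Q.det = 1 := by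
    rw [← hQdef, det_mul, det_transpose, hRsdet, hRdet, one_mul]
  -- scalar equations from orthogonality
  have hE := fun i j => congrFun (congrFun hQorth i) j
  have h00 := hE 0 0; have h11 := hE 1 1; have h22 := hE 2 2
  have h01 := hE 0 1; have h02 := hE 0 2; have h12 := hE 1 2
  simp [Matrix.mul_apply, Fin.sum_univ_three, Matrix.one_apply, Matrix.transpose_apply] at h00 h11 h22 h01 h02 h12
  have hdet := hQdet
  rw [Matrix.det_fin_three] at hdet
  have htrQ : Q.trace = Q 0 0 + Q 1 1 + Q 2 2 := by
    rw [Matrix.trace_fin_three]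
  have htr' : 1 < Q.trace := by
    have h1 : (1 - Q).trace = 3 - Q.trace := by
      rw [Matrix.trace_sub, Matrix.trace_one]; norm_num
    rw [h1] at htr; linarith
  have hle : Q 0 0 ≤ 1 ∧ Q 1 1 ≤ 1 ∧ Q 2 2 ≤ 1 := by
    refine ⟨?_, ?_, ?_⟩ <;> nlinarith [sq_nonneg (Q 0 0), sq_nonneg (Q 1 1), sq_nonneg (Q 2 2)]
  have htr3 : Q.trace ≤ 3 := by rw [htrQ]; linarith [hle.1, hle.2.1, hle.2.2]
  constructor
  · -- existence of θ
    refine ⟨Real.arccos ((Q.trace - 1) / 2), ⟨?_, ?_⟩, ?_⟩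
    · have := Real.arccos_nonneg ((Q.trace - 1) / 2)
      have : (0:ℝ) < π / 2 := by positivity
      linarith [Real.arccos_nonneg ((Q.trace - 1) / 2)]
    · rw [Real.arccos_lt_pi_div_two]; linarith
    · rw [Real.cos_arccos (by linarith) (by linarith)]; ring
  · constructor
    · intro h
      -- symmetry of Q from vee vanishing
      have hv0 := congrFun h 0
      have hv1 := congrFun h 1
      have hv2 := congrFun h 2
      simp [vee, hQT, Matrix.sub_apply, Matrix.transpose_apply] at hv0 hv1 hv2
      have hs21 : Q 2 1 = Q 1 2 := by linarith
      have hs02 : Q 0 2 = Q 2 0 := by linarith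
      have hs10 : Q 1 0 = Q 0 1 := by linarith
      simp only [hs21, hs02, hs10] at hdet h00 h11 h22 h01 h02 h12
      have ht3 : Q 0 0 + Q 1 1 + Q 2 2 = 3 := by
        have hkey : (Q 0 0 + Q 1 1 + Q 2 2 - 3) * ((Q 0 0 + Q 1 1 + Q 2 2 + 1) * (Q 0 0 + Q 1 1 + Q 2 2 + 2)) = 0 := by
          linear_combination 6 * hdet
            + (3 * (Q 0 0 + Q 1 1 + Q 2 2) - 2 * Q 0 0) * h00
            + (3 * (Q 0 0 + Q 1 1 + Q 2 2) - 2 * Q 1 1) * h11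
            + (3 * (Q 0 0 + Q 1 1 + Q 2 2) - 2 * Q 2 2) * h22
            - 4 * Q 0 1 * h01 - 4 * Q 2 0 * h02 - 4 * Q 1 2 * h12
        have ht1 : 1 < Q 0 0 + Q 1 1 + Q 2 2 := by rw [htrQ] at htr'; linarith
        rcases mul_eq_zero.mp hkey with h' | h'
        · linarith
        · rcases mul_eq_zero.mp h' with h'' | h'' <;> linarith
      have ha1 : Q 0 0 = 1 := by linarith [hle.1, hle.2.1, hle.2.2]
      have hd1 : Q 1 1 = 1 := by linarith [hle.1, hle.2.1, hle.2.2]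
      have hf1 : Q 2 2 = 1 := by linarith [hle.1, hle.2.1, hle.2.2]
      have hb0 : Q 0 1 = 0 := by nlinarith [sq_nonneg (Q 0 1), sq_nonneg (Q 2 0)]
      have hc0 : Q 2 0 = 0 := by nlinarith [sq_nonneg (Q 0 1), sq_nonneg (Q 2 0)]
      have he0 : Q 1 2 = 0 := by nlinarith [sq_nonneg (Q 0 1), sq_nonneg (Q 1 2)]
      have hQ1 : Q = 1 := by
        ext i j
        fin_cases i <;> fin_cases j <;>
          simp [Matrix.one_apply, ha1, hb0, hc0, hd1, he0, hf1, hs21, hs02, hs10]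
      have : Rs * Q = Rs * 1 := by rw [hQ1]
      rw [← hQdef, ← Matrix.mul_assoc, hRsRsT, Matrix.one_mul, Matrix.mul_one] at this
      exact this
    · intro h
      subst h
      rw [← hQdef]
      funext i
      fin_cases i <;> simp [vee, sub_self]
end
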